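/- arXiv:1201.6118 — 2 statements merged into one kernel-verified Lean document; each statement's English description precedes it below -/
import Mathlib

section
/- In the setting of Milnor patching (A ≅ B ×_D C with l : C → D surjective), for any finitely generated projective A-module E, the canonical map E → ker(E ⊗_A B ⊕ E ⊗_A C → E ⊗_A D), e ↦ (e⊗1, e⊗1), is an isomorphism of A-modules. -/
/-! The fibre-product hypothesis says precisely that
`0 → A → B × C → D`, `a ↦ (a, a)`, `(b, c) ↦ b - c`, is exact. A projective module is flat,
so the sequence stays exact after `⊗[A] E`, and `(B × C) ⊗[A] E ≅ (B ⊗[A] E) × (C ⊗[A] E)`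
turns the tensored sequence into the claimed one. -/

open TensorProduct

section MilnorSquare

variable (A B C D : Type*) [CommRing A] [CommRing B] [CommRing C] [CommRing D]
    [Algebra A B] [Algebra A C] [Algebra A D] [Algebra B D] [Algebra C D]
    [IsScalarTower A B D] [IsScalarTower A C D]

def IsFiberProduct : Prop :=
  ∀ (b : B) (c : C), algebraMap B D b = algebraMap C D c →
    ∃! a : A, algebraMap A B a = b ∧ algebraMap A C a = c

def pullbackIncl : A →ₗ[A] B × C :=
  (Algebra.linearMap A B).prod (Algebra.linearMap A C)

def pullbackDiff : B × C →ₗ[A] D :=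
  (IsScalarTower.toAlgHom A B D).toLinearMap ∘ₗ LinearMap.fst A B C -
    (IsScalarTower.toAlgHom A C D).toLinearMap ∘ₗ LinearMap.snd A B C

variable {A B C D}

theorem pullbackDiff_apply (x : B × C) :
    pullbackDiff A B C D x = algebraMap B D x.1 - algebraMap C D x.2 := rfl

theorem IsFiberProduct.injective_pullbackIncl (h : IsFiberProduct A B C D) :
    Function.Injective (pullbackIncl A B C) := by
  intro a a' haa'
  obtain ⟨hB, hC⟩ := Prod.ext_iff.mp haa'
  have hD : algebraMap B D (algebraMap A B a) = algebraMap C D (algebraMap A C a) := by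
    rw [← IsScalarTower.algebraMap_apply, ← IsScalarTower.algebraMap_apply]
  exact (h _ _ hD).unique ⟨rfl, rfl⟩ ⟨hB.symm, hC.symm⟩

theorem IsFiberProduct.exact (h : IsFiberProduct A B C D) :
    Function.Exact (pullbackIncl A B C) (pullbackDiff A B C D) := by
  rintro ⟨b, c⟩
  rw [pullbackDiff_apply, sub_eq_zero]
  constructor
  · intro hbc
    obtain ⟨a, hb, hc⟩ := (h b c hbc).exists
    exact ⟨a, Prod.ext hb hc⟩
  · rintro ⟨a, ha⟩
    obtain ⟨rfl, rfl⟩ := Prod.ext_iff.mp ha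
    exact (IsScalarTower.algebraMap_apply A B D a).symm.trans
      (IsScalarTower.algebraMap_apply A C D a)

section BaseChange

variable (A B C D) (E : Type*) [AddCommGroup E] [Module A E]

def oneTmulProd : E →ₗ[A] (B ⊗[A] E) × (C ⊗[A] E) :=
  (TensorProduct.mk A B E 1).prod (TensorProduct.mk A C E 1)

def rTensorDiff : (B ⊗[A] E) × (C ⊗[A] E) →ₗ[A] D ⊗[A] E :=
  (IsScalarTower.toAlgHom A B D).toLinearMap.rTensor E ∘ₗ LinearMap.fst A _ _ -
    (IsScalarTower.toAlgHom A C D).toLinearMap.rTensor E ∘ₗ LinearMap.snd A _ _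

theorem oneTmulProd_comp_lid :
    oneTmulProd A B C E ∘ₗ (TensorProduct.lid A E).toLinearMap =
      (prodLeft A A B C E).toLinearMap ∘ₗ (pullbackIncl A B C).rTensor E := by
  refine TensorProduct.ext' fun a e => ?_
  simp [oneTmulProd, pullbackIncl, smul_tmul', Algebra.algebraMap_eq_smul_one]

theorem rTensorDiff_comp_prodLeft :
    rTensorDiff A B C D E ∘ₗ (prodLeft A A B C E).toLinearMap =
      (pullbackDiff A B C D).rTensor E := by
  refine TensorProduct.ext' fun ⟨b, c⟩ e => ?_
  simp [rTensorDiff, pullbackDiff]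

variable {A B C D E} [Module.Flat A E]

theorem IsFiberProduct.injective_oneTmulProd (h : IsFiberProduct A B C D) :
    Function.Injective (oneTmulProd A B C E) := by
  have hcomp : Function.Injective (oneTmulProd A B C E ∘ₗ (TensorProduct.lid A E).toLinearMap) := by
    rw [oneTmulProd_comp_lid]
    exact (prodLeft A A B C E).injective.comp
      (Module.Flat.rTensor_preserves_injective_linearMap _ h.injective_pullbackIncl)
  rw [LinearMap.coe_comp, LinearEquiv.coe_coe] at hcomp
  exact hcomp.of_comp_right (TensorProduct.lid A E).surjective

theorem IsFiberProduct.exact_oneTmulProd_rTensorDiff (h : IsFiberProduct A B C D) :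
    Function.Exact (oneTmulProd A B C E) (rTensorDiff A B C D E) :=
  (Function.Exact.iff_of_ladder_linearEquiv (e₃ := LinearEquiv.refl A (D ⊗[A] E))
    (oneTmulProd_comp_lid A B C E) (rTensorDiff_comp_prodLeft A B C D E)).2
    (Module.Flat.rTensor_exact E h.exact)

end BaseChange

end MilnorSquare

theorem milnor_patching_unit_iso_general
    (A B C D : Type) [CommRing A] [CommRing B] [CommRing C] [CommRing D]
    [Algebra A B] [Algebra A C] [Algebra A D] [Algebra B D] [Algebra C D]
    [IsScalarTower A B D] [IsScalarTower A C D]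
    (hfib : ∀ (b : B) (c : C), algebraMap B D b = algebraMap C D c →
      ∃! a : A, algebraMap A B a = b ∧ algebraMap A C a = c)
    (E : Type) [AddCommGroup E] [Module A E]
    [Module.Projective A E] :
    Function.Injective
      (fun e : E => (((1 : B) ⊗ₜ[A] e : B ⊗[A] E), ((1 : C) ⊗ₜ[A] e : C ⊗[A] E))) ∧
    (∀ (x : B ⊗[A] E) (y : C ⊗[A] E),
      LinearMap.rTensor E (IsScalarTower.toAlgHom A B D).toLinearMap x =
        LinearMap.rTensor E (IsScalarTower.toAlgHom A C D).toLinearMap y ↔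
      ∃ e : E, (1 : B) ⊗ₜ[A] e = x ∧ (1 : C) ⊗ₜ[A] e = y) := by
  have h : IsFiberProduct A B C D := hfib
  refine ⟨h.injective_oneTmulProd (E := E), fun x y => ?_⟩
  have := h.exact_oneTmulProd_rTensorDiff (E := E) (x, y)
  simpa [rTensorDiff, oneTmulProd, sub_eq_zero, Prod.ext_iff] using this

/-- In the Milnor patching situation (`A ≅ B ×_D C`, `C → D` surjective), for any
finitely generated projective `A`-module `E` the canonical map
`E → ker(B ⊗[A] E ⊕ C ⊗[A] E → D ⊗[A] E)`, `e ↦ (1 ⊗ e, 1 ⊗ e)`,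
is an isomorphism of `A`-modules: it is injective, and its image is exactly the
kernel of the difference of the two base-change maps. -/
theorem milnor_patching_unit_iso
    (A B C D : Type) [CommRing A] [CommRing B] [CommRing C] [CommRing D]
    [Algebra A B] [Algebra A C] [Algebra A D] [Algebra B D] [Algebra C D]
    [IsScalarTower A B D] [IsScalarTower A C D]
    (hfib : ∀ (b : B) (c : C), algebraMap B D b = algebraMap C D c →
      ∃! a : A, algebraMap A B a = b ∧ algebraMap A C a = c)
    (hsurj : Function.Surjective (algebraMap C D))
    (E : Type) [AddCommGroup E] [Module A E]
    [Module.Finite A E] [Module.Projective A E] :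
    Function.Injective
      (fun e : E => (((1 : B) ⊗ₜ[A] e : B ⊗[A] E), ((1 : C) ⊗ₜ[A] e : C ⊗[A] E))) ∧
    (∀ (x : B ⊗[A] E) (y : C ⊗[A] E),
      LinearMap.rTensor E (IsScalarTower.toAlgHom A B D).toLinearMap x =
        LinearMap.rTensor E (IsScalarTower.toAlgHom A C D).toLinearMap y ↔
      ∃ e : E, (1 : B) ⊗ₜ[A] e = x ∧ (1 : C) ⊗ₜ[A] e = y) :=
  milnor_patching_unit_iso_general A B C D hfib E
end

section
/- Let A ≅ B ×_D C be a fiber product of rings with l : C → D surjective. Given bounded chain complexes (M, d_M) of finitely generated projective B-modules and (N, d_N) of finitely generated projective C-modules, and an isomorphism of chain complexes of D-modules α : M ⊗_B D ≅ N ⊗_C D, the complex ker(M ⊕ N → N ⊗_C D) with differential d_M ⊕ d_N is a bounded chain complex of finitely generated projective A-modules. -/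
/-!
Everything happens degreewise, and naturality of `α` makes `d_M × d_N` preserve the kernels;
so the content is Milnor patching for a single isomorphism `h : D ⊗_B M ≅ D ⊗_C N`.

For `M = B^ι`, `N = C^ι` and `h` the canonical identification, the kernel of
`(m, n) ↦ h(1 ⊗ m) - 1 ⊗ n` is `A^ι`, because `A = B ×_D C`. For an arbitrary `h`, given by
`g ∈ GL_ι(D)`, Whitehead's lemma writes `diag(g, g⁻¹)` as a product of elementary block
matrices; these lift along the surjection `C → D`, so the kernel for `h ⊕ h⁻¹` is isomorphic
to `A^ι × A^ι` and the kernel for `h` is a direct summand of it. Projective `M` and `N` are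
reduced to the free case by adding complements `K`, `L` with `K × M ≅ B^p`, `L × N ≅ C^q`,
and extending `h` by an isomorphism `D ⊗ (K × B^q) ≅ D ⊗ (L × C^p)`.
-/

open TensorProduct

theorem Module.finite_projective_of_prod_linearEquiv {R X Y P : Type*} [Semiring R]
    [AddCommMonoid X] [AddCommMonoid Y] [AddCommMonoid P] [Module R X] [Module R Y] [Module R P]
    [Module.Finite R P] [Module.Projective R P] (e : (X × Y) ≃ₗ[R] P) :
    Module.Finite R X ∧ Module.Projective R X :=
  have := Module.Finite.equiv e.symm
  have := Module.Projective.of_equiv e.symm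
  ⟨.of_surjective (LinearMap.fst R X Y) Prod.fst_surjective,
    .of_split (LinearMap.inl R X Y) (LinearMap.fst R X Y) (LinearMap.fst_comp_inl R X Y)⟩

theorem TensorProduct.piScalarRight_one_tmul (R D : Type*) [CommRing R] [CommRing D]
    [Algebra R D] {ι : Type*} [Fintype ι] [DecidableEq ι] (m : ι → R) :
    piScalarRight R D D ι (1 ⊗ₜ m) = (algebraMap R D).compLeft ι m := by
  ext i
  simp [Algebra.algebraMap_eq_smul_one]

namespace MilnorPatching

variable {A B C D : Type*} [CommRing A] [CommRing B] [CommRing C] [CommRing D]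
  [Algebra A B] [Algebra A C] [Algebra A D] [Algebra B D] [Algebra C D]
  [IsScalarTower A B D] [IsScalarTower A C D]

section PatchKer

variable {M N M' N' : Type*}
  [AddCommGroup M] [AddCommGroup N] [AddCommGroup M'] [AddCommGroup N']
  [Module B M] [Module C N] [Module B M'] [Module C N']
  [Module A M] [Module A N] [Module A M'] [Module A N']
  [IsScalarTower A B M] [IsScalarTower A C N] [IsScalarTower A B M'] [IsScalarTower A C N']

variable (A) in
noncomputable def patchMap (h : D ⊗[B] M ≃ₗ[D] D ⊗[C] N) : M × N →ₗ[A] D ⊗[C] N :=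
  h.toLinearMap.restrictScalars A ∘ₗ (TensorProduct.mk B D M 1).restrictScalars A ∘ₗ
      LinearMap.fst A M N -
    (TensorProduct.mk C D N 1).restrictScalars A ∘ₗ LinearMap.snd A M N

variable (A) in
noncomputable def patchKer (h : D ⊗[B] M ≃ₗ[D] D ⊗[C] N) : Submodule A (M × N) :=
  LinearMap.ker (patchMap A h)

theorem mem_patchKer {h : D ⊗[B] M ≃ₗ[D] D ⊗[C] N} {p : M × N} :
    p ∈ patchKer A h ↔ h (1 ⊗ₜ p.1) = 1 ⊗ₜ p.2 :=
  sub_eq_zero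

theorem prodMap_mem_patchKer {h : D ⊗[B] M ≃ₗ[D] D ⊗[C] N} {h' : D ⊗[B] M' ≃ₗ[D] D ⊗[C] N'}
    {f : M →ₗ[B] M'} {g : N →ₗ[C] N'}
    (hfg : ∀ x, h' (f.baseChange D x) = g.baseChange D (h x)) {p : M × N}
    (hp : p ∈ patchKer A h) : (f p.1, g p.2) ∈ patchKer A h' := by
  rw [mem_patchKer] at hp ⊢
  rw [← LinearMap.baseChange_tmul, hfg, hp, LinearMap.baseChange_tmul]

variable (A) in
noncomputable def patchKerCongr
    {h : D ⊗[B] M ≃ₗ[D] D ⊗[C] N} {h' : D ⊗[B] M' ≃ₗ[D] D ⊗[C] N'} (e : M ≃ₗ[B] M') (f : N ≃ₗ[C] N')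
    (hef : ∀ m n, h (1 ⊗ₜ m) = 1 ⊗ₜ n ↔ h' (1 ⊗ₜ e m) = 1 ⊗ₜ f n) :
    patchKer A h ≃ₗ[A] patchKer A h' :=
  ((e.restrictScalars A).prodCongr (f.restrictScalars A)).submoduleMap (patchKer A h) ≪≫ₗ
    LinearEquiv.ofEq _ _ (by
      ext ⟨m', n'⟩
      rw [Submodule.map_equiv_eq_comap_symm, Submodule.mem_comap]
      simpa [mem_patchKer] using hef (e.symm m') (f.symm n'))

variable (A) in
noncomputable def patchKerBaseChangeEquiv (e : M ≃ₗ[B] M') (f : N ≃ₗ[C] N')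
    (h : D ⊗[B] M ≃ₗ[D] D ⊗[C] N) :
    patchKer A h ≃ₗ[A]
      patchKer A ((e.baseChange B D M M').symm ≪≫ₗ h ≪≫ₗ f.baseChange C D N N') :=
  patchKerCongr A e f fun m n => by
    rw [LinearEquiv.trans_apply, LinearEquiv.trans_apply, LinearEquiv.baseChange_symm_tmul,
      e.symm_apply_apply, ← LinearEquiv.baseChange_tmul,
      (f.baseChange C D N N').injective.eq_iff]

noncomputable def patchProd (h : D ⊗[B] M ≃ₗ[D] D ⊗[C] N)
    (h' : D ⊗[B] M' ≃ₗ[D] D ⊗[C] N') : D ⊗[B] (M × M') ≃ₗ[D] D ⊗[C] (N × N') :=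
  prodRight B D D M M' ≪≫ₗ h.prodCongr h' ≪≫ₗ (prodRight C D D N N').symm

theorem patchProd_one_tmul_eq_one_tmul_iff (h : D ⊗[B] M ≃ₗ[D] D ⊗[C] N)
    (h' : D ⊗[B] M' ≃ₗ[D] D ⊗[C] N') (x : M × M') (y : N × N') :
    patchProd h h' (1 ⊗ₜ x) = 1 ⊗ₜ y ↔
      h (1 ⊗ₜ x.1) = 1 ⊗ₜ y.1 ∧ h' (1 ⊗ₜ x.2) = 1 ⊗ₜ y.2 := by
  rw [patchProd, LinearEquiv.trans_apply, LinearEquiv.trans_apply, LinearEquiv.symm_apply_eq]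
  simp [Prod.ext_iff]

variable (A) in
noncomputable def patchKerProdEquiv (h : D ⊗[B] M ≃ₗ[D] D ⊗[C] N)
    (h' : D ⊗[B] M' ≃ₗ[D] D ⊗[C] N') :
    patchKer A (patchProd h h') ≃ₗ[A] patchKer A h × patchKer A h' where
  toFun p :=
    have hp := (patchProd_one_tmul_eq_one_tmul_iff h h' _ _).1 (mem_patchKer.1 p.2)
    (⟨(p.1.1.1, p.1.2.1), mem_patchKer.2 hp.1⟩,
      ⟨(p.1.1.2, p.1.2.2), mem_patchKer.2 hp.2⟩)
  invFun q := ⟨((q.1.1.1, q.2.1.1), (q.1.1.2, q.2.1.2)), mem_patchKer.2 <|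
    (patchProd_one_tmul_eq_one_tmul_iff h h' _ _).2
      ⟨mem_patchKer.1 q.1.2, mem_patchKer.1 q.2.2⟩⟩
  left_inv _ := rfl
  right_inv _ := rfl
  map_add' _ _ := rfl
  map_smul' _ _ := rfl

end PatchKer

section Lift

variable {ι : Type*} [Fintype ι] [DecidableEq ι]

theorem exists_linearMap_lift (hsurj : Function.Surjective (algebraMap C D)) {κ : Type*}
    (x : (ι → D) →ₗ[D] (κ → D)) :
    ∃ y : (ι → C) →ₗ[C] (κ → C),
      ∀ w, (algebraMap C D).compLeft κ (y w) = x ((algebraMap C D).compLeft ι w) := by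
  choose Q hQ using fun k i => hsurj (LinearMap.toMatrix' x k i)
  have hQx : (Matrix.of Q).map (algebraMap C D) = LinearMap.toMatrix' x := Matrix.ext hQ
  refine ⟨Matrix.toLin' (Matrix.of Q), fun w => funext fun k => ?_⟩
  rw [RingHom.compLeft_apply, Function.comp_apply, Matrix.toLin'_apply, RingHom.map_mulVec,
    hQx, ← Matrix.toLin'_apply, Matrix.toLin'_toMatrix']
  rfl

theorem exists_semiconj_prodMap_symm (hsurj : Function.Surjective (algebraMap C D))
    (g : (ι → D) ≃ₗ[D] (ι → D)) :
    ∃ u : ((ι → C) × (ι → C)) ≃ₗ[C] ((ι → C) × (ι → C)),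
      Function.Semiconj (Prod.map ((algebraMap C D).compLeft ι) ((algebraMap C D).compLeft ι))
        u (Prod.map g g.symm) := by
  obtain ⟨y, hy⟩ := exists_linearMap_lift hsurj g.toLinearMap
  obtain ⟨z, hz⟩ := exists_linearMap_lift hsurj g.symm.toLinearMap
  let lower (x : (ι → C) →ₗ[C] (ι → C)) := (LinearEquiv.refl C _).skewProd (.refl C _) x
  let upper (x : (ι → C) →ₗ[C] (ι → C)) :=
    LinearEquiv.prodComm C _ _ ≪≫ₗ lower x ≪≫ₗ LinearEquiv.prodComm C _ _
  let rotate :=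
    LinearEquiv.prodComm C (ι → C) (ι → C) ≪≫ₗ (LinearEquiv.neg C).prodCongr (.refl C _)
  -- Whitehead: `diag(g, g⁻¹) = [1 g; 0 1] [1 0; -g⁻¹ 1] [1 g; 0 1] [0 -1; 1 0]`.
  refine ⟨rotate ≪≫ₗ upper y ≪≫ₗ lower (-z) ≪≫ₗ upper y, fun ⟨a, b⟩ => ?_⟩
  simp [lower, upper, rotate, hy, hz]

end Lift

section Free

variable {ι : Type*} [Fintype ι] [DecidableEq ι]

variable (B C) in
noncomputable def ofPi (g : (ι → D) ≃ₗ[D] (ι → D)) :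
    D ⊗[B] (ι → B) ≃ₗ[D] D ⊗[C] (ι → C) :=
  piScalarRight B D D ι ≪≫ₗ g ≪≫ₗ (piScalarRight C D D ι).symm

theorem ofPi_one_tmul_eq_one_tmul_iff (g : (ι → D) ≃ₗ[D] (ι → D)) (m : ι → B)
    (n : ι → C) :
    ofPi B C g (1 ⊗ₜ m) = 1 ⊗ₜ n ↔
      g ((algebraMap B D).compLeft ι m) = (algebraMap C D).compLeft ι n := by
  rw [ofPi, LinearEquiv.trans_apply, LinearEquiv.trans_apply, LinearEquiv.symm_apply_eq,
    piScalarRight_one_tmul, piScalarRight_one_tmul]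

theorem exists_eq_ofPi (h : D ⊗[B] (ι → B) ≃ₗ[D] D ⊗[C] (ι → C)) : ∃ g, h = ofPi B C g :=
  ⟨(piScalarRight B D D ι).symm ≪≫ₗ h ≪≫ₗ piScalarRight C D D ι,
    LinearEquiv.ext fun x => by
      simp only [ofPi, LinearEquiv.trans_apply, LinearEquiv.symm_apply_apply]⟩

theorem mem_patchKer_ofPi_refl {p : (ι → B) × (ι → C)} :
    p ∈ patchKer A (ofPi B C (LinearEquiv.refl D (ι → D))) ↔
      ∀ i, algebraMap B D (p.1 i) = algebraMap C D (p.2 i) := by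
  rw [mem_patchKer, ofPi_one_tmul_eq_one_tmul_iff, funext_iff]
  rfl

variable (A) in
noncomputable def piEquivPatchKerOfPiRefl
    (hfib : ∀ (b : B) (c : C), algebraMap B D b = algebraMap C D c →
      ∃! a : A, algebraMap A B a = b ∧ algebraMap A C a = c) :
    (ι → A) ≃ₗ[A] patchKer A (ofPi B C (LinearEquiv.refl D (ι → D))) :=
  have compat (a : A) :
      algebraMap B D (algebraMap A B a) = algebraMap C D (algebraMap A C a) := by
    rw [← IsScalarTower.algebraMap_apply, ← IsScalarTower.algebraMap_apply]
  LinearEquiv.ofBijective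
    ((((Algebra.linearMap A B).compLeft ι).prod
      ((Algebra.linearMap A C).compLeft ι)).codRestrict
        _ fun a => mem_patchKer_ofPi_refl.2 fun i => compat (a i))
    ⟨fun a a' haa => funext fun i => (hfib _ _ (compat (a i))).unique ⟨rfl, rfl⟩
        ⟨(congr_fun (congr_arg (fun p => p.1.1) haa) i).symm,
          (congr_fun (congr_arg (fun p => p.1.2) haa) i).symm⟩,
      fun ⟨⟨m, n⟩, hmn⟩ => by
        choose a ha using fun i => (hfib _ _ (mem_patchKer_ofPi_refl.1 hmn i)).exists
        exact ⟨a, Subtype.ext <| Prod.ext (funext fun i => (ha i).1) (funext fun i => (ha i).2)⟩⟩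

theorem patchKer_finite_projective_of_pi
    (hfib : ∀ (b : B) (c : C), algebraMap B D b = algebraMap C D c →
      ∃! a : A, algebraMap A B a = b ∧ algebraMap A C a = c)
    (hsurj : Function.Surjective (algebraMap C D))
    (h : D ⊗[B] (ι → B) ≃ₗ[D] D ⊗[C] (ι → C)) :
    Module.Finite A (patchKer A h) ∧ Module.Projective A (patchKer A h) := by
  obtain ⟨g, rfl⟩ := exists_eq_ofPi h
  obtain ⟨u, hu⟩ := exists_semiconj_prodMap_symm hsurj g
  have hc (m : (ι → B) × (ι → B)) (n : (ι → C) × (ι → C)) :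
      patchProd (ofPi B C g) (ofPi B C g.symm) (1 ⊗ₜ m) = 1 ⊗ₜ n ↔
        patchProd (ofPi B C (.refl D _)) (ofPi B C (.refl D _)) (1 ⊗ₜ m) = 1 ⊗ₜ u.symm n := by
    obtain ⟨n, rfl⟩ := u.surjective n
    have hn₁ : (algebraMap C D).compLeft ι (u n).1 = g ((algebraMap C D).compLeft ι n.1) :=
      congrArg Prod.fst (hu n)
    have hn₂ : (algebraMap C D).compLeft ι (u n).2 = g.symm ((algebraMap C D).compLeft ι n.2) :=
      congrArg Prod.snd (hu n)
    simp only [patchProd_one_tmul_eq_one_tmul_iff, ofPi_one_tmul_eq_one_tmul_iff, hn₁, hn₂,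
      g.injective.eq_iff, g.symm.injective.eq_iff, u.symm_apply_apply, LinearEquiv.refl_apply]
  exact Module.finite_projective_of_prod_linearEquiv <|
    (patchKerProdEquiv A _ _).symm ≪≫ₗ patchKerCongr A (.refl B _) u.symm hc ≪≫ₗ
      patchKerProdEquiv A _ _ ≪≫ₗ
      (piEquivPatchKerOfPiRefl A hfib).symm.prodCongr (piEquivPatchKerOfPiRefl A hfib).symm

end Free

section General

variable {M N K L : Type*} [AddCommGroup M] [AddCommGroup N] [AddCommGroup K] [AddCommGroup L]
  [Module B M] [Module C N] [Module B K] [Module C L]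
  {ι κ : Type*} [Fintype ι] [DecidableEq ι] [Fintype κ] [DecidableEq κ]

/-- `D ⊗ (K × B^κ) ≅ D ⊗ K × (D ⊗ L × D ⊗ N) ≅ D ⊗ L × (D ⊗ K × D ⊗ M) ≅ D ⊗ (L × C^ι)`,
with `h⁻¹` exchanging the `N`- and `M`-parts. -/
noncomputable def complementPatch (h : D ⊗[B] M ≃ₗ[D] D ⊗[C] N) (eM : (ι → B) ≃ₗ[B] K × M)
    (eN : (κ → C) ≃ₗ[C] L × N) : D ⊗[B] (K × (κ → B)) ≃ₗ[D] D ⊗[C] (L × (ι → C)) :=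
  prodRight B D D K (κ → B) ≪≫ₗ
    (LinearEquiv.refl D _).prodCongr (ofPi B C (.refl D _) ≪≫ₗ eN.baseChange C D _ _ ≪≫ₗ
      prodRight C D D L N ≪≫ₗ (LinearEquiv.refl D _).prodCongr h.symm) ≪≫ₗ
    (LinearEquiv.prodAssoc D _ _ _).symm ≪≫ₗ
    (LinearEquiv.prodComm D _ _).prodCongr (.refl D _) ≪≫ₗ
    LinearEquiv.prodAssoc D _ _ _ ≪≫ₗ
    (LinearEquiv.refl D _).prodCongr ((prodRight B D D K M).symm ≪≫ₗ
      (eM.baseChange B D _ _).symm ≪≫ₗ ofPi B C (.refl D _)) ≪≫ₗ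
    (prodRight C D D L (ι → C)).symm

theorem patchKer_finite_projective
    [Module A M] [Module A N] [IsScalarTower A B M] [IsScalarTower A C N]
    [Module.Finite B M] [Module.Projective B M] [Module.Finite C N] [Module.Projective C N]
    (hfib : ∀ (b : B) (c : C), algebraMap B D b = algebraMap C D c →
      ∃! a : A, algebraMap A B a = b ∧ algebraMap A C a = c)
    (hsurj : Function.Surjective (algebraMap C D)) (h : D ⊗[B] M ≃ₗ[D] D ⊗[C] N) :
    Module.Finite A (patchKer A h) ∧ Module.Projective A (patchKer A h) := by
  obtain ⟨p, πM, sM, -, -, hsM⟩ := Module.Finite.exists_comp_eq_id_of_projective B M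
  obtain ⟨q, πN, sN, -, -, hsN⟩ := Module.Finite.exists_comp_eq_id_of_projective C N
  let eM := ((LinearMap.exact_subtype_ker_map πM).splitSurjectiveEquiv
    (Submodule.injective_subtype _) ⟨sM, hsM⟩).1
  let eN := ((LinearMap.exact_subtype_ker_map πN).splitSurjectiveEquiv
    (Submodule.injective_subtype _) ⟨sN, hsN⟩).1
  let eX : (M × (LinearMap.ker πM × (Fin q → B))) ≃ₗ[B] (Fin p ⊕ Fin q → B) :=
    (LinearEquiv.prodAssoc B _ _ _).symm ≪≫ₗ
      (LinearEquiv.prodComm B _ _).prodCongr (.refl B _) ≪≫ₗ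
      eM.symm.prodCongr (.refl B _) ≪≫ₗ
      (LinearEquiv.sumArrowLequivProdArrow _ _ B B).symm
  let eY : (N × (LinearMap.ker πN × (Fin p → C))) ≃ₗ[C] (Fin p ⊕ Fin q → C) :=
    (LinearEquiv.prodAssoc C _ _ _).symm ≪≫ₗ
      (LinearEquiv.prodComm C _ _).prodCongr (.refl C _) ≪≫ₗ
      eN.symm.prodCongr (.refl C _) ≪≫ₗ LinearEquiv.prodComm C _ _ ≪≫ₗ
      (LinearEquiv.sumArrowLequivProdArrow _ _ C C).symm
  have ⟨_, _⟩ := patchKer_finite_projective_of_pi hfib hsurj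
    ((eX.baseChange B D _ _).symm ≪≫ₗ patchProd h (complementPatch h eM eN) ≪≫ₗ
      eY.baseChange C D _ _)
  exact Module.finite_projective_of_prod_linearEquiv <|
    (patchKerProdEquiv A h (complementPatch h eM eN)).symm ≪≫ₗ
      patchKerBaseChangeEquiv A eX eY _

end General

end MilnorPatching

theorem landsburg_patching_complexes_general
    (A B C D : Type) [CommRing A] [CommRing B] [CommRing C] [CommRing D]
    [Algebra A B] [Algebra A C] [Algebra A D] [Algebra B D] [Algebra C D]
    [IsScalarTower A B D] [IsScalarTower A C D]
    (hfib : ∀ (b : B) (c : C), algebraMap B D b = algebraMap C D c →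
      ∃! a : A, algebraMap A B a = b ∧ algebraMap A C a = c)
    (hsurj : Function.Surjective (algebraMap C D))
    (M N : ℤ → Type)
    [∀ i, AddCommGroup (M i)] [∀ i, AddCommGroup (N i)]
    [∀ i, Module B (M i)] [∀ i, Module C (N i)]
    [∀ i, Module A (M i)] [∀ i, Module A (N i)]
    [∀ i, IsScalarTower A B (M i)] [∀ i, IsScalarTower A C (N i)]
    [∀ i, Module.Finite B (M i)] [∀ i, Module.Projective B (M i)]
    [∀ i, Module.Finite C (N i)] [∀ i, Module.Projective C (N i)]
    -- the differentials (a cochain complex structure)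
    (dM : ∀ {i j : ℤ}, i + 1 = j → (M i →ₗ[B] M j))
    (dN : ∀ {i j : ℤ}, i + 1 = j → (N i →ₗ[C] N j))
    -- boundedness
    (bdd : ∃ a b : ℤ, ∀ i : ℤ, i < a ∨ b < i → Subsingleton (M i) ∧ Subsingleton (N i))
    -- the gluing isomorphism of complexes of `D`-modules
    (α : ∀ i : ℤ, (D ⊗[B] M i) ≃ₗ[D] (D ⊗[C] N i))
    (hα : ∀ {i j : ℤ} (h : i + 1 = j) (x : D ⊗[B] M i),
      α j (LinearMap.baseChange D (dM h) x) = LinearMap.baseChange D (dN h) (α i x))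
    -- the degreewise patching maps
    (φ : ∀ i : ℤ, (M i × N i) →ₗ[A] (D ⊗[C] N i))
    (hφ : ∀ (i : ℤ) (p : M i × N i),
      φ i p = α i ((1 : D) ⊗ₜ[B] p.1) - (1 : D) ⊗ₜ[C] p.2) :
    (∀ i : ℤ, Module.Finite A (LinearMap.ker (φ i)) ∧
      Module.Projective A (LinearMap.ker (φ i))) ∧
    -- the differential preserves the kernels, so the kernels form a complex
    (∀ {i j : ℤ} (h : i + 1 = j) (p : M i × N i), p ∈ LinearMap.ker (φ i) →
      (dM h p.1, dN h p.2) ∈ LinearMap.ker (φ j)) ∧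
    -- and that complex is bounded
    (∃ a b : ℤ, ∀ i : ℤ, i < a ∨ b < i → Subsingleton (LinearMap.ker (φ i))) := by
  obtain rfl : φ = fun i => MilnorPatching.patchMap A (α i) :=
    funext fun i => LinearMap.ext (hφ i)
  refine ⟨fun i => MilnorPatching.patchKer_finite_projective hfib hsurj (α i),
    fun h _ hp => MilnorPatching.prodMap_mem_patchKer (hα h) hp, ?_⟩
  obtain ⟨a, b, hab⟩ := bdd
  refine ⟨a, b, fun i hi => ?_⟩
  obtain ⟨_, _⟩ := hab i hi
  infer_instance

/-- Landsburg's complex-level extension of Milnor patching.  Given a Milnor square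
(`A ≅ B ×_D C`, `C → D` surjective), bounded cochain complexes `M` of finitely
generated projective `B`-modules and `N` of finitely generated projective
`C`-modules, and an isomorphism of complexes of `D`-modules
`α : D ⊗[B] M ≅ D ⊗[C] N`, the degreewise kernel
`P i = ker(M i ⊕ N i → D ⊗[C] N i)` (with differential `d_M ⊕ d_N`, which
preserves the kernels) is a bounded complex of finitely generated projective
`A`-modules. -/
theorem landsburg_patching_complexes
    (A B C D : Type) [CommRing A] [CommRing B] [CommRing C] [CommRing D]
    [Algebra A B] [Algebra A C] [Algebra A D] [Algebra B D] [Algebra C D]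
    [IsScalarTower A B D] [IsScalarTower A C D]
    (hfib : ∀ (b : B) (c : C), algebraMap B D b = algebraMap C D c →
      ∃! a : A, algebraMap A B a = b ∧ algebraMap A C a = c)
    (hsurj : Function.Surjective (algebraMap C D))
    (M N : ℤ → Type)
    [∀ i, AddCommGroup (M i)] [∀ i, AddCommGroup (N i)]
    [∀ i, Module B (M i)] [∀ i, Module C (N i)]
    [∀ i, Module A (M i)] [∀ i, Module A (N i)]
    [∀ i, IsScalarTower A B (M i)] [∀ i, IsScalarTower A C (N i)]
    [∀ i, Module.Finite B (M i)] [∀ i, Module.Projective B (M i)]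
    [∀ i, Module.Finite C (N i)] [∀ i, Module.Projective C (N i)]
    -- the differentials (a cochain complex structure)
    (dM : ∀ {i j : ℤ}, i + 1 = j → (M i →ₗ[B] M j))
    (dN : ∀ {i j : ℤ}, i + 1 = j → (N i →ₗ[C] N j))
    (hdM : ∀ {i j p : ℤ} (h : i + 1 = j) (h' : j + 1 = p) (x : M i),
      dM h' (dM h x) = 0)
    (hdN : ∀ {i j p : ℤ} (h : i + 1 = j) (h' : j + 1 = p) (y : N i),
      dN h' (dN h y) = 0)
    -- boundedness
    (bdd : ∃ a b : ℤ, ∀ i : ℤ, i < a ∨ b < i → Subsingleton (M i) ∧ Subsingleton (N i))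
    -- the gluing isomorphism of complexes of `D`-modules
    (α : ∀ i : ℤ, (D ⊗[B] M i) ≃ₗ[D] (D ⊗[C] N i))
    (hα : ∀ {i j : ℤ} (h : i + 1 = j) (x : D ⊗[B] M i),
      α j (LinearMap.baseChange D (dM h) x) = LinearMap.baseChange D (dN h) (α i x))
    -- the degreewise patching maps
    (φ : ∀ i : ℤ, (M i × N i) →ₗ[A] (D ⊗[C] N i))
    (hφ : ∀ (i : ℤ) (p : M i × N i),
      φ i p = α i ((1 : D) ⊗ₜ[B] p.1) - (1 : D) ⊗ₜ[C] p.2) :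
    (∀ i : ℤ, Module.Finite A (LinearMap.ker (φ i)) ∧
      Module.Projective A (LinearMap.ker (φ i))) ∧
    -- the differential preserves the kernels, so the kernels form a complex
    (∀ {i j : ℤ} (h : i + 1 = j) (p : M i × N i), p ∈ LinearMap.ker (φ i) →
      (dM h p.1, dN h p.2) ∈ LinearMap.ker (φ j)) ∧
    -- and that complex is bounded
    (∃ a b : ℤ, ∀ i : ℤ, i < a ∨ b < i → Subsingleton (LinearMap.ker (φ i))) :=
  landsburg_patching_complexes_general A B C D hfib hsurj M N dM dN bdd α hα φ hφ
end
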